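/- arXiv:1705.05591 — 3 statements merged into one kernel-verified Lean document; each statement's English description precedes it below -/
import Mathlib

section
/- Let n ≥ 2, Δ > 0, and let (c_m)_{m∈ℤ} be a bounded sequence with 0 ≤ c_m − c_{m−1} ≤ Δ for all m ∈ ℤ. Then the spline f(x) = Σ_{m∈ℤ} c_m βⁿ(x/Δ − m) is differentiable with 0 ≤ f'(x) ≤ 1 for all x, and hence is firmly nonexpansive. -/
/-!
Since `βⁿ⁺²` is compactly supported, the series is locally a finite sum, and
`(βⁿ⁺²)' = βⁿ⁺¹ (· + 1/2) - βⁿ⁺¹ (· - 1/2)`. Summation by parts turns `Δ f'(x)` into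
`∑ₘ (c m - c (m - 1)) βⁿ⁺¹ (x / Δ + 1/2 - m)`: an average of the differences
`c m - c (m - 1) ∈ [0, Δ]` against the integer shifts of `βⁿ⁺¹`, which are nonnegative and sum
to one. Hence `0 ≤ f' ≤ 1`, and the mean value theorem does the rest.
-/

open MeasureTheory

/-- The B-spline of order `n`: `β⁰` is the indicator of `[-1/2, 1/2]` and
`βⁿ = βⁿ⁻¹ * β⁰` (convolution). -/
noncomputable def bspline : ℕ → ℝ → ℝ
  | 0 => Set.indicator (Set.Icc (-(1 / 2) : ℝ) (1 / 2)) (fun _ => 1)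
  | n + 1 => fun x => ∫ t in Set.Icc (-(1 / 2) : ℝ) (1 / 2), bspline n (x - t)

noncomputable def splineSeries (φ : ℝ → ℝ) (c : ℤ → ℝ) (y : ℝ) : ℝ :=
  ∑' m : ℤ, c m * φ (y - m)

section IntegerShifts

variable {φ : ℝ → ℝ} {R : ℝ}

lemma mem_Icc_ceil_floor_of_abs_sub_le {y r : ℝ} {m : ℤ} (h : |y - m| ≤ r) :
    m ∈ Finset.Icc ⌈y - r⌉ ⌊y + r⌋ := by
  rw [abs_sub_le_iff] at h
  rw [Finset.mem_Icc, Int.ceil_le, Int.le_floor]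
  constructor <;> linarith

lemma apply_sub_intCast_eq_zero_of_notMem (hφ : ∀ x, R < |x| → φ x = 0) {y : ℝ} {m : ℤ}
    (hm : m ∉ Finset.Icc ⌈y - R⌉ ⌊y + R⌋) : φ (y - m) = 0 :=
  hφ _ (not_le.1 fun h => hm (mem_Icc_ceil_floor_of_abs_sub_le h))

lemma hasFiniteSupport_apply_sub_intCast (hφ : ∀ x, R < |x| → φ x = 0) (y : ℝ) :
    (fun m : ℤ => φ (y - m)).HasFiniteSupport :=
  (Finset.Icc ⌈y - R⌉ ⌊y + R⌋).finite_toSet.subset fun _ hm =>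
    by_contra fun h => hm (apply_sub_intCast_eq_zero_of_notMem hφ h)

lemma tsum_mul_sub_shift_eq_tsum_sub_shift_mul (c : ℤ → ℝ) {g : ℤ → ℝ}
    (hg : g.HasFiniteSupport) :
    ∑' m, c m * (g m - g (m + 1)) = ∑' m, (c m - c (m - 1)) * g m := by
  have hshift : ∑' m, c m * g (m + 1) = ∑' m, c (m - 1) * g m := by
    simpa using (Equiv.addRight (1 : ℤ)).tsum_eq fun m => c (m - 1) * g m
  have hcg : Summable fun m => c m * g m := summable_of_hasFiniteSupport (hg.mul_right c)
  have hcg_pred : Summable fun m => c (m - 1) * g m :=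
    summable_of_hasFiniteSupport (hg.mul_right fun m => c (m - 1))
  have hcg_succ : Summable fun m => c m * g (m + 1) := by
    simpa [Function.comp_def] using (Equiv.addRight (1 : ℤ)).summable_iff.2 hcg_pred
  simp only [mul_sub, sub_mul]
  rw [hcg.tsum_sub hcg_succ, hcg.tsum_sub hcg_pred, hshift]

lemma splineSeries_eq_sum (hφ : ∀ x, R < |x| → φ x = 0) (c : ℤ → ℝ) {y z r : ℝ}
    (hz : |z - y| ≤ r) :
    splineSeries φ c z = ∑ m ∈ Finset.Icc ⌈y - (R + r)⌉ ⌊y + (R + r)⌋, c m * φ (z - m) := by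
  refine tsum_eq_sum fun m hm => ?_
  rw [hφ _ (not_le.1 fun h => hm (mem_Icc_ceil_floor_of_abs_sub_le ?_)), mul_zero]
  linarith [abs_sub_le y z m, abs_sub_comm y z]

lemma HasDerivAt.eq_zero_of_lt_abs (hφ : ∀ x, R < |x| → φ x = 0) {d x : ℝ}
    (hd : HasDerivAt φ d x) (hx : R < |x|) : d = 0 :=
  have hzero : φ =ᶠ[nhds x] fun _ => 0 :=
    Filter.mem_of_superset ((isOpen_lt continuous_const continuous_abs).mem_nhds hx) hφ
  hd.unique ((hasDerivAt_const x 0).congr_of_eventuallyEq hzero)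

lemma hasDerivAt_splineSeries (hφ : ∀ x, R < |x| → φ x = 0) {φ' : ℝ → ℝ}
    (hd : ∀ x, HasDerivAt φ (φ' x) x) (c : ℤ → ℝ) (y : ℝ) :
    HasDerivAt (splineSeries φ c) (splineSeries φ' c y) y := by
  have hφ' : ∀ x, R < |x| → φ' x = 0 := fun x => (hd x).eq_zero_of_lt_abs hφ
  have hloc : (fun z => ∑ m ∈ Finset.Icc ⌈y - (R + 1)⌉ ⌊y + (R + 1)⌋, c m * φ (z - m))
      =ᶠ[nhds y] splineSeries φ c :=
    Filter.mem_of_superset (Metric.closedBall_mem_nhds y one_pos) fun z hz =>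
      (splineSeries_eq_sum hφ c (by rwa [← Real.dist_eq])).symm
  rw [splineSeries_eq_sum hφ' c (by simp : |y - y| ≤ 1)]
  exact (HasDerivAt.fun_sum fun (m : ℤ) _ =>
    ((hd (y - m)).comp_sub_const y m).const_mul (c m)).congr_of_eventuallyEq hloc.symm

end IntegerShifts

lemma bspline_nonneg : ∀ (n : ℕ) (x : ℝ), 0 ≤ bspline n x
  | 0, x => Set.indicator_nonneg (fun _ _ => zero_le_one) x
  | n + 1, x => setIntegral_nonneg measurableSet_Icc fun t _ => bspline_nonneg n (x - t)

-- The inequality is strict because `β⁰` is the indicator of a closed interval: `β⁰ (1/2) = 1`.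
lemma bspline_eq_zero_of_lt_abs :
    ∀ {n : ℕ} {x : ℝ}, ((n : ℝ) + 1) / 2 < |x| → bspline n x = 0
  | 0, x, hx => Set.indicator_of_notMem (fun h => by
      norm_num at hx; linarith [abs_le.2 ⟨h.1, h.2⟩]) _
  | n + 1, x, hx => by
      refine (setIntegral_congr_fun (g := fun _ => 0) measurableSet_Icc fun t ht =>
        bspline_eq_zero_of_lt_abs ?_).trans (integral_zero _ _)
      push_cast at hx
      linarith [abs_sub_abs_le_abs_sub x t, abs_le.2 ⟨ht.1, ht.2⟩]

lemma bspline_succ_eq_zero_of_lt_abs {n : ℕ} {x : ℝ} (hx : ((n : ℝ) + 2) / 2 < |x|) :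
    bspline (n + 1) x = 0 :=
  bspline_eq_zero_of_lt_abs (by push_cast; linarith)

lemma hasCompactSupport_bspline (n : ℕ) : HasCompactSupport (bspline n) :=
  HasCompactSupport.intro (isCompact_closedBall (0 : ℝ) (((n : ℝ) + 1) / 2)) fun _ hx =>
    bspline_eq_zero_of_lt_abs (by simpa using hx)

lemma bspline_succ_eq_intervalIntegral (n : ℕ) (x : ℝ) :
    bspline (n + 1) x = ∫ s in (x - 1 / 2)..(x + 1 / 2), bspline n s := by
  show (∫ t in Set.Icc (-(1 / 2) : ℝ) (1 / 2), bspline n (x - t)) = _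
  rw [integral_Icc_eq_integral_Ioc,
    ← intervalIntegral.integral_of_le (by norm_num : (-(1 / 2) : ℝ) ≤ 1 / 2),
    intervalIntegral.integral_comp_sub_left (bspline n) x]
  norm_num

lemma bspline_succ_eq_sub_primitive {n : ℕ} (h : Integrable (bspline n)) (x : ℝ) :
    bspline (n + 1) x =
      (∫ s in (0 : ℝ)..(x + 1 / 2), bspline n s) -
        ∫ s in (0 : ℝ)..(x - 1 / 2), bspline n s := by
  rw [bspline_succ_eq_intervalIntegral,
    intervalIntegral.integral_interval_sub_left h.intervalIntegrable h.intervalIntegrable]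

lemma continuous_bspline_succ_of_integrable {n : ℕ} (h : Integrable (bspline n)) :
    Continuous (bspline (n + 1)) := by
  have hG := intervalIntegral.continuous_primitive (fun _ _ => h.intervalIntegrable) 0
  rw [funext (bspline_succ_eq_sub_primitive h)]
  exact (hG.comp (continuous_add_const _)).sub (hG.comp (continuous_sub_right _))

lemma integrable_bspline : ∀ n : ℕ, Integrable (bspline n)
  | 0 => (integrable_indicator_iff measurableSet_Icc).2 (integrableOn_const measure_Icc_lt_top.ne)
  | n + 1 => Continuous.integrable_of_hasCompactSupport
      (continuous_bspline_succ_of_integrable (integrable_bspline n)) (hasCompactSupport_bspline _)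

lemma continuous_bspline_succ (n : ℕ) : Continuous (bspline (n + 1)) :=
  continuous_bspline_succ_of_integrable (integrable_bspline n)

lemma hasDerivAt_bspline_succ {n : ℕ} (hc : Continuous (bspline n)) (x : ℝ) :
    HasDerivAt (bspline (n + 1)) (bspline n (x + 1 / 2) - bspline n (x - 1 / 2)) x := by
  have hG (u : ℝ) : HasDerivAt (fun v => ∫ s in (0 : ℝ)..v, bspline n s) (bspline n u) u :=
    intervalIntegral.integral_hasDerivAt_right (integrable_bspline n).intervalIntegrable
      hc.stronglyMeasurable.stronglyMeasurableAtFilter hc.continuousAt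
  rw [funext (bspline_succ_eq_sub_primitive (integrable_bspline n))]
  exact ((hG _).comp_add_const x _).sub ((hG _).comp_sub_const x _)

lemma bspline_one (x : ℝ) : bspline 1 x = max (1 - |x|) 0 := by
  rw [bspline_succ_eq_intervalIntegral, intervalIntegral.integral_of_le (by linarith),
    ← integral_Icc_eq_integral_Ioc]
  show (∫ s in Set.Icc (x - 1 / 2) (x + 1 / 2),
      Set.indicator (Set.Icc (-(1 / 2) : ℝ) (1 / 2)) (fun _ => (1 : ℝ)) s) = _
  rw [setIntegral_indicator measurableSet_Icc, setIntegral_const, Set.Icc_inter_Icc,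
    Real.volume_real_Icc, smul_eq_mul, mul_one]
  rcases abs_cases x with ⟨h1, h2⟩ | ⟨h1, h2⟩ <;>
    simp only [max_def, min_def] <;> split_ifs <;> linarith

lemma sum_bspline_one_sub_intCast_eq_one (y : ℝ) {S : Finset ℤ}
    (hS : ∀ m : ℤ, |y - m| ≤ 1 → m ∈ S) : ∑ m ∈ S, bspline 1 (y - m) = 1 := by
  have hfl : (⌊y⌋ : ℝ) ≤ y := Int.floor_le y
  have hfl' : y < ⌊y⌋ + 1 := Int.lt_floor_add_one y
  have hpair : {⌊y⌋, ⌊y⌋ + 1} ⊆ S := by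
    intro m hm
    rcases Finset.mem_insert.1 hm with rfl | hm
    · exact hS _ (by rw [abs_le]; constructor <;> linarith)
    · rw [Finset.mem_singleton.1 hm]
      exact hS _ (by rw [abs_le]; push_cast; constructor <;> linarith)
  rw [← Finset.sum_subset hpair fun m _ hm => ?_, Finset.sum_pair (by omega), bspline_one,
    bspline_one, abs_of_nonneg (by linarith), abs_of_nonpos (by push_cast; linarith)]
  · push_cast
    rw [max_eq_left (by linarith), max_eq_left (by linarith)]
    ring
  · rw [bspline_one, max_eq_right]
    simp only [Finset.mem_insert, Finset.mem_singleton, not_or] at hm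
    rcases (by omega : m ≤ ⌊y⌋ - 1 ∨ ⌊y⌋ + 2 ≤ m) with h | h
    · have : (m : ℝ) ≤ ⌊y⌋ - 1 := by exact_mod_cast h
      rw [abs_of_nonneg (by linarith)]; linarith
    · have : (⌊y⌋ : ℝ) + 2 ≤ m := by exact_mod_cast h
      rw [abs_of_nonpos (by linarith)]; linarith

lemma sum_bspline_succ_sub_intCast_eq_one :
    ∀ (n : ℕ) (y : ℝ) {S : Finset ℤ}, (∀ m : ℤ, |y - m| ≤ ((n : ℝ) + 2) / 2 → m ∈ S) →
      ∑ m ∈ S, bspline (n + 1) (y - m) = 1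
  | 0, y, _, hS => sum_bspline_one_sub_intCast_eq_one y fun m hm => hS m (by norm_num [hm])
  | n + 1, y, S, hS => by
      have hshift (t : ℝ) (ht : t ∈ Set.Icc (-(1 / 2) : ℝ) (1 / 2)) :
          ∑ m ∈ S, bspline (n + 1) (y - m - t) = 1 := by
        simp only [sub_right_comm y _ t]
        refine sum_bspline_succ_sub_intCast_eq_one n (y - t) fun m hm => hS m ?_
        rw [sub_right_comm] at hm
        push_cast
        linarith [abs_sub_abs_le_abs_sub (y - m) t, abs_le.2 ⟨ht.1, ht.2⟩]
      show ∑ m ∈ S, ∫ t in Set.Icc (-(1 / 2) : ℝ) (1 / 2), bspline (n + 1) (y - m - t) = 1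
      rw [← integral_finsetSum (f := fun (m : ℤ) t => bspline (n + 1) (y - m - t)) _
          fun m _ => ((integrable_bspline _).comp_sub_left (y - m)).integrableOn,
        setIntegral_congr_fun measurableSet_Icc hshift]
      norm_num

lemma tsum_bspline_succ_sub_intCast (n : ℕ) (y : ℝ) :
    ∑' m : ℤ, bspline (n + 1) (y - m) = 1 := by
  rw [tsum_eq_sum fun m hm => apply_sub_intCast_eq_zero_of_notMem
    (fun _ => bspline_succ_eq_zero_of_lt_abs) hm]
  exact sum_bspline_succ_sub_intCast_eq_one n y fun m hm => mem_Icc_ceil_floor_of_abs_sub_le hm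

lemma tsum_mul_bspline_sub_intCast_mem_Icc (n : ℕ) {d : ℤ → ℝ} {a b : ℝ}
    (hd : ∀ m, d m ∈ Set.Icc a b) (y : ℝ) :
    ∑' m, d m * bspline (n + 1) (y - m) ∈ Set.Icc a b := by
  have hfin :=
    hasFiniteSupport_apply_sub_intCast (fun _ => bspline_succ_eq_zero_of_lt_abs (n := n)) y
  have hβ : Summable fun m : ℤ => bspline (n + 1) (y - m) := summable_of_hasFiniteSupport hfin
  have hdβ : Summable fun m => d m * bspline (n + 1) (y - m) :=
    summable_of_hasFiniteSupport (hfin.mul_right d)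
  have hconst (e : ℝ) : ∑' m : ℤ, e * bspline (n + 1) (y - m) = e := by
    rw [tsum_mul_left, tsum_bspline_succ_sub_intCast, mul_one]
  constructor
  · calc a = ∑' m : ℤ, a * bspline (n + 1) (y - m) := (hconst a).symm
      _ ≤ _ := (hβ.mul_left a).tsum_le_tsum
        (fun m => mul_le_mul_of_nonneg_right (hd m).1 (bspline_nonneg _ _)) hdβ
  · calc
      _ ≤ ∑' m : ℤ, b * bspline (n + 1) (y - m) := hdβ.tsum_le_tsum
        (fun m => mul_le_mul_of_nonneg_right (hd m).2 (bspline_nonneg _ _)) (hβ.mul_left b)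
      _ = b := hconst b

lemma hasDerivAt_splineSeries_bspline (k : ℕ) (c : ℤ → ℝ) (y : ℝ) :
    HasDerivAt (splineSeries (bspline (k + 2)) c)
      (∑' m, (c m - c (m - 1)) * bspline (k + 1) (y + 1 / 2 - m)) y := by
  convert hasDerivAt_splineSeries (fun _ => bspline_succ_eq_zero_of_lt_abs)
    (hasDerivAt_bspline_succ (continuous_bspline_succ k)) c y using 1
  rw [splineSeries, ← tsum_mul_sub_shift_eq_tsum_sub_shift_mul c
    (hasFiniteSupport_apply_sub_intCast (fun _ => bspline_succ_eq_zero_of_lt_abs) _)]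
  congr! 5 with m <;> push_cast <;> ring

theorem bspline_series_firmly_nonexpansive_general (n : ℕ) (hn : 2 ≤ n) (Δ : ℝ) (hΔ : 0 < Δ)
    (c : ℤ → ℝ)
    (hc : ∀ m : ℤ, 0 ≤ c m - c (m - 1) ∧ c m - c (m - 1) ≤ Δ)
    (f : ℝ → ℝ)
    (hf : ∀ x : ℝ, f x = ∑' m : ℤ, c m * bspline n (x / Δ - (m : ℝ))) :
    Differentiable ℝ f ∧ (∀ x : ℝ, 0 ≤ deriv f x ∧ deriv f x ≤ 1) ∧
      (∀ x y : ℝ, y < x → 0 ≤ f x - f y ∧ f x - f y ≤ x - y) := by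
  obtain ⟨k, rfl⟩ : ∃ k, n = k + 2 := ⟨n - 2, by omega⟩
  set slope := fun x => ∑' m, (c m - c (m - 1)) * bspline (k + 1) (x / Δ + 1 / 2 - m)
  have hderiv (x : ℝ) : HasDerivAt f (slope x / Δ) x := by
    rw [show f = splineSeries (bspline (k + 2)) c ∘ fun x => id x / Δ from funext hf]
    exact ((hasDerivAt_splineSeries_bspline k c (x / Δ)).comp x
      ((hasDerivAt_id x).div_const Δ)).congr_deriv (div_eq_mul_one_div _ _).symm
  have hslope (x : ℝ) : slope x ∈ Set.Icc 0 Δ :=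
    tsum_mul_bspline_sub_intCast_mem_Icc k hc _
  have hdiff : Differentiable ℝ f := fun x => (hderiv x).differentiableAt
  have hbounds (x : ℝ) : 0 ≤ deriv f x ∧ deriv f x ≤ 1 := by
    rw [(hderiv x).deriv]
    exact ⟨div_nonneg (hslope x).1 hΔ.le, (div_le_one hΔ).2 (hslope x).2⟩
  refine ⟨hdiff, hbounds, fun x y hxy => ⟨?_, ?_⟩⟩
  · exact sub_nonneg.2 (monotone_of_deriv_nonneg hdiff (fun z => (hbounds z).1) hxy.le)
  · simpa using image_sub_le_mul_sub_of_deriv_le hdiff (fun z => (hbounds z).2) hxy.le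

/-- For `n ≥ 2`, a B-spline series whose bounded coefficients satisfy
`0 ≤ c_m − c_{m−1} ≤ Δ` is differentiable with derivative in `[0,1]`, hence firmly
nonexpansive. -/
theorem bspline_series_firmly_nonexpansive (n : ℕ) (hn : 2 ≤ n) (Δ : ℝ) (hΔ : 0 < Δ)
    (c : ℤ → ℝ) (hbd : ∃ B : ℝ, ∀ m : ℤ, |c m| ≤ B)
    (hc : ∀ m : ℤ, 0 ≤ c m - c (m - 1) ∧ c m - c (m - 1) ≤ Δ)
    (f : ℝ → ℝ)
    (hf : ∀ x : ℝ, f x = ∑' m : ℤ, c m * bspline n (x / Δ - (m : ℝ))) :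
    Differentiable ℝ f ∧ (∀ x : ℝ, 0 ≤ deriv f x ∧ deriv f x ≤ 1) ∧
      (∀ x y : ℝ, y < x → 0 ≤ f x - f y ∧ f x - f y ≤ x - y) :=
  bspline_series_firmly_nonexpansive_general n hn Δ hΔ c hc f hf
end

section
/- Let Φ : ℝ^N → (−∞, +∞] be proper, lower semicontinuous, and convex. If the proximal operator prox_Φ is antisymmetric (prox_Φ(−x) = −prox_Φ(x) for all x), then the subdifferential is symmetric in the sense that u ∈ ∂Φ(x) if and only if −u ∈ ∂Φ(−x), and consequently Φ(−x) = Φ(x) for all x. -/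
/-!
Since `p = (id + ∂Φ)⁻¹`, a subgradient `u ∈ ∂Φ(x)` is the same as `p (x + u) = x`, so the
antisymmetry of `p` carries `u ∈ ∂Φ(x)` to `-u ∈ ∂Φ(-x)`.

For the values, the Moreau envelope `e x = Φ (p x) + ‖p x - x‖² / 2` satisfies
`e y ≤ e x + ⟪x - p x, y - x⟫ + ‖y - x‖² / 2`. Applied at `x, y` and at `-y, -x`, and combined with
the nonexpansiveness of `p`, this bounds the increments of `x ↦ e x - e (-x)` by `‖y - x‖²`; that
function therefore has zero derivative and vanishes, which says `Φ (-p z) = Φ (p z)`. Finally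
every point `x` of the domain is a limit of points `p z` with `Φ (p z) ≤ Φ x` (local minimizers of
`Φ + c ‖· - x‖²` for large `c`), and lower semicontinuity at `-x` gives `Φ (-x) ≤ Φ x`.
-/

open scoped RealInnerProductSpace
open Filter Topology Metric

theorem EReal.ne_top_of_add_coe_le {a b : EReal} {r s : ℝ} (h : a + r ≤ b + s) (hb : b ≠ ⊤) :
    a ≠ ⊤ := by
  rintro rfl
  rw [EReal.top_add_coe, top_le_iff] at h
  exact EReal.add_ne_top hb (EReal.coe_ne_top s) h

theorem eq_of_sub_le_norm_sub_sq {E : Type*} [NormedAddCommGroup E] [NormedSpace ℝ E]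
    {f : E → ℝ} (hf : ∀ x y, f y - f x ≤ ‖y - x‖ ^ 2) (x y : E) : f x = f y := by
  have hderiv : ∀ x, HasFDerivAt f (0 : E →L[ℝ] ℝ) x := fun x => by
    rw [hasFDerivAt_iff_isLittleO_nhds_zero]
    refine Asymptotics.IsBigO.trans_isLittleO ?_ (Asymptotics.isLittleO_norm_pow_id one_lt_two)
    refine Asymptotics.IsBigO.of_bound 1 (Eventually.of_forall fun h => ?_)
    have h₁ := hf x (x + h)
    have h₂ := hf (x + h) x
    simp only [add_sub_cancel_left, sub_add_cancel_left, norm_neg] at h₁ h₂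
    simp only [zero_apply, sub_zero, Real.norm_eq_abs, norm_pow, abs_norm, one_mul, abs_le]
    constructor <;> linarith
  exact is_const_of_fderiv_eq_zero (fun x => (hderiv x).differentiableAt)
    (fun x => (hderiv x).fderiv) x y

def ConvexEReal {E : Type*} [AddCommGroup E] [Module ℝ E] (Φ : E → EReal) : Prop :=
  ∀ x y : E, ∀ t : ℝ, 0 ≤ t → t ≤ 1 →
    Φ (t • x + (1 - t) • y) ≤ (t : EReal) * Φ x + ((1 - t : ℝ) : EReal) * Φ y

section Normed

variable {F : Type*} [NormedAddCommGroup F]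

def IsProx (Φ : F → EReal) (p : F → F) : Prop :=
  ∀ x u : F, u = p x ↔
    ∀ w, Φ u + ((‖u - x‖ ^ 2 / 2 : ℝ) : EReal) ≤ Φ w + ((‖w - x‖ ^ 2 / 2 : ℝ) : EReal)

noncomputable def moreauEnv (Φ : F → EReal) (p : F → F) (x : F) : ℝ :=
  (Φ (p x)).toReal + ‖p x - x‖ ^ 2 / 2

namespace IsProx

variable {Φ : F → EReal} {p : F → F}

theorem minimizes (hp : IsProx Φ p) (x w : F) :
    Φ (p x) + ((‖p x - x‖ ^ 2 / 2 : ℝ) : EReal) ≤ Φ w + ((‖w - x‖ ^ 2 / 2 : ℝ) : EReal) :=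
  (hp x (p x)).1 rfl w

theorem ne_top (hp : IsProx Φ p) (hproper : ∃ x, Φ x ≠ ⊤) (x : F) : Φ (p x) ≠ ⊤ := by
  obtain ⟨w, hw⟩ := hproper
  exact EReal.ne_top_of_add_coe_le (hp.minimizes x w) hw

theorem coe_toReal (hp : IsProx Φ p) (hproper : ∃ x, Φ x ≠ ⊤) (hbot : ∀ x, Φ x ≠ ⊥) (x : F) :
    ((Φ (p x)).toReal : EReal) = Φ (p x) :=
  EReal.coe_toReal (hp.ne_top hproper x) (hbot _)

end IsProx

theorem LowerSemicontinuous.exists_isLocalMin_add_sq [ProperSpace F] {Φ : F → EReal}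
    (hlsc : LowerSemicontinuous Φ) (hbot : ∀ x, Φ x ≠ ⊥) {x : F} (hx : Φ x ≠ ⊤) {ε : ℝ}
    (hε : 0 < ε) : ∃ c : ℝ, ∃ v, dist v x < ε ∧ Φ v ≤ Φ x ∧
      IsLocalMin (fun w => Φ w + ((c * ‖w - x‖ ^ 2 : ℝ) : EReal)) v := by
  have hx_mem : x ∈ closedBall x ε := mem_closedBall_self hε.le
  obtain ⟨w₀, -, hw₀⟩ :=
    (hlsc.lowerSemicontinuousOn _).exists_isMinOn ⟨x, hx_mem⟩ (isCompact_closedBall x ε)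
  lift Φ x to ℝ using ⟨hx, hbot x⟩ with a ha
  have hw₀x : Φ w₀ ≤ a := ha ▸ hw₀ hx_mem
  lift Φ w₀ to ℝ using ⟨ne_top_of_le_ne_top (EReal.coe_ne_top a) hw₀x, hbot w₀⟩ with m hm
  -- `c ε²` exceeds `Φ x - Φ w₀`, so no minimizer of `g` on the ball lies on its boundary sphere.
  set c := (a - m + 1) / ε ^ 2
  have hc : c * ε ^ 2 = a - m + 1 := div_mul_cancel₀ _ (by positivity)
  set g := fun w => Φ w + ((c * ‖w - x‖ ^ 2 : ℝ) : EReal)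
  have hg : LowerSemicontinuous g :=
    hlsc.add' (continuous_coe_real_ereal.comp (by fun_prop)).lowerSemicontinuous fun w =>
      EReal.continuousAt_add (Or.inr (EReal.coe_ne_bot _)) (Or.inr (EReal.coe_ne_top _))
  obtain ⟨v, hvB, hv⟩ :=
    (hg.lowerSemicontinuousOn _).exists_isMinOn ⟨x, hx_mem⟩ (isCompact_closedBall x ε)
  have hgv : g v ≤ a := by simpa [g, ← ha] using hv hx_mem
  have hdist : dist v x < ε := by
    by_contra! hge
    have hnorm : ‖v - x‖ = ε := by rw [← dist_eq_norm]; exact le_antisymm hvB hge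
    have : ((a + 1 : ℝ) : EReal) ≤ g v := by
      rw [show a + 1 = m + c * ‖v - x‖ ^ 2 by rw [hnorm, hc]; ring, EReal.coe_add, hm]
      exact add_le_add_left (hw₀ hvB) _
    linarith [EReal.coe_le_coe_iff.1 (this.trans hgv)]
  refine ⟨c, v, hdist, ?_, hv.isLocalMin (closedBall_mem_nhds_of_mem hdist)⟩
  have hc₀ : 0 ≤ c := div_nonneg (by linarith [EReal.coe_le_coe_iff.1 hw₀x]) (sq_nonneg ε)
  exact le_trans (le_add_of_nonneg_right (EReal.coe_nonneg.2 (by positivity))) hgv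

end Normed

section InnerProduct

variable {F : Type*} [NormedAddCommGroup F] [InnerProductSpace ℝ F]

def IsSubgradient (Φ : F → EReal) (x u : F) : Prop :=
  ∀ y, Φ x + ((⟪u, y - x⟫ : ℝ) : EReal) ≤ Φ y

theorem IsSubgradient.ne_top {Φ : F → EReal} (hproper : ∃ x, Φ x ≠ ⊤) {x u : F}
    (h : IsSubgradient Φ x u) : Φ x ≠ ⊤ := by
  obtain ⟨w, hw⟩ := hproper
  exact EReal.ne_top_of_add_coe_le (s := 0) (by simpa using h w) hw

theorem IsSubgradient.inner_sub_nonneg {Φ : F → EReal} (hproper : ∃ x, Φ x ≠ ⊤)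
    (hbot : ∀ x, Φ x ≠ ⊥) {x y u v : F} (hx : IsSubgradient Φ x u) (hy : IsSubgradient Φ y v) :
    0 ≤ ⟪u - v, x - y⟫ := by
  lift Φ x to ℝ using ⟨hx.ne_top hproper, hbot x⟩ with a ha
  lift Φ y to ℝ using ⟨hy.ne_top hproper, hbot y⟩ with b hb
  have hxy : a + ⟪u, y - x⟫ ≤ b := by exact_mod_cast ha ▸ hb ▸ hx y
  have hyx : b + ⟪v, x - y⟫ ≤ a := by exact_mod_cast ha ▸ hb ▸ hy x
  have : ⟪u, y - x⟫ = -⟪u, x - y⟫ := by rw [← inner_neg_right, neg_sub]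
  rw [inner_sub_left]
  linarith

theorem ConvexEReal.isSubgradient_of_isLocalMin {Φ : F → EReal} (hΦ : ConvexEReal Φ)
    (hbot : ∀ x, Φ x ≠ ⊥) {c : ℝ} {v z : F} (hv : Φ v ≠ ⊤)
    (hmin : IsLocalMin (fun w => Φ w + ((c * ‖w - z‖ ^ 2 : ℝ) : EReal)) v) :
    IsSubgradient Φ v ((2 * c) • (z - v)) := by
  intro y
  rcases eq_or_ne (Φ y) ⊤ with hy | hy
  · rw [hy]; exact le_top
  lift Φ v to ℝ using ⟨hv, hbot v⟩ with a ha
  lift Φ y to ℝ using ⟨hy, hbot y⟩ with b hb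
  set I := ⟪z - v, y - v⟫
  set Q := ‖y - v‖ ^ 2
  have hsegment : Tendsto (fun t : ℝ => v + t • (y - v)) (𝓝[>] 0) (𝓝 v) := by
    have : Continuous (fun t : ℝ => v + t • (y - v)) := by fun_prop
    simpa using (this.tendsto 0).mono_left nhdsWithin_le_nhds
  have hdiff : ∀ᶠ t in 𝓝[>] (0 : ℝ), a + 2 * c * I ≤ b + t * (c * Q) := by
    filter_upwards [hsegment.eventually hmin, self_mem_nhdsWithin,
      Ioo_mem_nhdsGT (zero_lt_one' ℝ)] with t hmin_t (ht : 0 < t) ht1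
    have hconv := hΦ y v t ht.le ht1.2.le
    rw [show t • y + (1 - t) • v = v + t • (y - v) by module, ← ha, ← hb,
      ← EReal.coe_mul, ← EReal.coe_mul, ← EReal.coe_add] at hconv
    have hreal : a + c * ‖v - z‖ ^ 2 ≤ (t * b + (1 - t) * a) + c * ‖v + t • (y - v) - z‖ ^ 2 := by
      have := hmin_t.trans (add_le_add_left hconv _)
      rw [← ha] at this
      exact_mod_cast this
    have hexpand : ‖v + t • (y - v) - z‖ ^ 2 = ‖v - z‖ ^ 2 - 2 * t * I + t ^ 2 * Q := by
      rw [show v + t • (y - v) - z = (v - z) + t • (y - v) by abel, norm_add_sq_real,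
        real_inner_smul_right, norm_smul, mul_pow, Real.norm_eq_abs, sq_abs,
        show v - z = -(z - v) by abel, inner_neg_left]
      ring
    rw [hexpand] at hreal
    refine le_of_mul_le_mul_left ?_ ht
    linear_combination hreal
  have hlim : Tendsto (fun t : ℝ => b + t * (c * Q)) (𝓝[>] 0) (𝓝 b) := by
    have : Continuous (fun t : ℝ => b + t * (c * Q)) := by fun_prop
    simpa using (this.tendsto 0).mono_left nhdsWithin_le_nhds
  have := ge_of_tendsto hlim hdiff
  rw [real_inner_smul_left]
  exact_mod_cast (by linarith : a + 2 * c * I ≤ b)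

namespace IsProx

variable {Φ : F → EReal} {p : F → F}

theorem isSubgradient (hp : IsProx Φ p) (hproper : ∃ x, Φ x ≠ ⊤) (hbot : ∀ x, Φ x ≠ ⊥)
    (hΦ : ConvexEReal Φ) (x : F) : IsSubgradient Φ (p x) (x - p x) := by
  have hmin : IsLocalMin (fun w => Φ w + ((1 / 2 * ‖w - x‖ ^ 2 : ℝ) : EReal)) (p x) :=
    Eventually.of_forall fun w => by simpa only [one_div_mul_eq_div] using hp.minimizes x w
  simpa using hΦ.isSubgradient_of_isLocalMin hbot (hp.ne_top hproper x) hmin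

theorem apply_add_eq (hp : IsProx Φ p) {x u : F} (h : IsSubgradient Φ x u) : p (x + u) = x := by
  refine ((hp (x + u) x).2 fun w => ?_).symm
  have hquad : ‖x - (x + u)‖ ^ 2 / 2 ≤ ⟪u, w - x⟫ + ‖w - (x + u)‖ ^ 2 / 2 := by
    rw [show x - (x + u) = -u by abel, show w - (x + u) = (w - x) - u by abel, norm_neg,
      norm_sub_sq_real, real_inner_comm]
    nlinarith [sq_nonneg ‖w - x‖]
  calc Φ x + ((‖x - (x + u)‖ ^ 2 / 2 : ℝ) : EReal)
      ≤ Φ x + ((⟪u, w - x⟫ : ℝ) : EReal) + ((‖w - (x + u)‖ ^ 2 / 2 : ℝ) : EReal) := by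
        rw [add_assoc, ← EReal.coe_add]
        exact add_le_add_right (EReal.coe_le_coe_iff.2 hquad) _
    _ ≤ Φ w + ((‖w - (x + u)‖ ^ 2 / 2 : ℝ) : EReal) := add_le_add_left (h w) _

theorem isSubgradient_neg (hp : IsProx Φ p) (hproper : ∃ x, Φ x ≠ ⊤) (hbot : ∀ x, Φ x ≠ ⊥)
    (hΦ : ConvexEReal Φ) (hanti : ∀ x, p (-x) = -p x) {x u : F} (h : IsSubgradient Φ x u) :
    IsSubgradient Φ (-x) (-u) := by
  have hpx : p (-(x + u)) = -x := by rw [hanti, hp.apply_add_eq h]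
  have := hp.isSubgradient hproper hbot hΦ (-(x + u))
  rwa [hpx, show -(x + u) - -x = -u by abel] at this

theorem norm_sub_le (hp : IsProx Φ p) (hproper : ∃ x, Φ x ≠ ⊤) (hbot : ∀ x, Φ x ≠ ⊥)
    (hΦ : ConvexEReal Φ) (x y : F) : ‖p x - p y‖ ≤ ‖x - y‖ := by
  have hmono := (hp.isSubgradient hproper hbot hΦ x).inner_sub_nonneg hproper hbot
    (hp.isSubgradient hproper hbot hΦ y)
  rw [show x - p x - (y - p y) = (x - y) - (p x - p y) by abel, inner_sub_left,
    real_inner_self_eq_norm_sq] at hmono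
  have hcs := real_inner_le_norm (x - y) (p x - p y)
  nlinarith [norm_nonneg (x - y), norm_nonneg (p x - p y)]

theorem moreauEnv_le (hp : IsProx Φ p) (hproper : ∃ x, Φ x ≠ ⊤) (hbot : ∀ x, Φ x ≠ ⊥)
    (x y : F) : moreauEnv Φ p y ≤ moreauEnv Φ p x + ⟪x - p x, y - x⟫ + ‖y - x‖ ^ 2 / 2 := by
  have hmin := hp.minimizes y (p x)
  rw [← hp.coe_toReal hproper hbot y, ← hp.coe_toReal hproper hbot x] at hmin
  have hreal : (Φ (p y)).toReal + ‖p y - y‖ ^ 2 / 2 ≤ (Φ (p x)).toReal + ‖p x - y‖ ^ 2 / 2 := by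
    exact_mod_cast hmin
  rw [show p x - y = -(x - p x) - (y - x) by abel, norm_sub_sq_real (-(x - p x)), norm_neg,
    inner_neg_left] at hreal
  unfold moreauEnv
  rw [norm_sub_rev (p x)]
  linarith

theorem moreauEnv_neg (hp : IsProx Φ p) (hproper : ∃ x, Φ x ≠ ⊤) (hbot : ∀ x, Φ x ≠ ⊥)
    (hΦ : ConvexEReal Φ) (hanti : ∀ x, p (-x) = -p x) (x : F) :
    moreauEnv Φ p (-x) = moreauEnv Φ p x := by
  have hodd := eq_of_sub_le_norm_sub_sq (f := fun w => moreauEnv Φ p w - moreauEnv Φ p (-w))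
    (fun x y => ?_) 0 x
  · simp only [neg_zero, sub_self] at hodd
    linarith
  have h₁ := hp.moreauEnv_le hproper hbot x y
  have h₂ := hp.moreauEnv_le hproper hbot (-y) (-x)
  rw [hanti, show -x - -y = y - x by abel, show -y - -p y = -(y - p y) by abel,
    inner_neg_left] at h₂
  have hinner : ⟪x - p x, y - x⟫ - ⟪y - p y, y - x⟫ = ⟪p y - p x, y - x⟫ - ‖y - x‖ ^ 2 := by
    rw [← inner_sub_left, show x - p x - (y - p y) = (p y - p x) - (y - x) by abel,
      inner_sub_left, real_inner_self_eq_norm_sq]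
  have hcs : ⟪p y - p x, y - x⟫ ≤ ‖y - x‖ ^ 2 := by
    calc ⟪p y - p x, y - x⟫ ≤ ‖p y - p x‖ * ‖y - x‖ := real_inner_le_norm _ _
      _ ≤ ‖y - x‖ * ‖y - x‖ := by
        gcongr
        exact hp.norm_sub_le hproper hbot hΦ y x
      _ = ‖y - x‖ ^ 2 := by ring
  linarith

theorem apply_neg (hp : IsProx Φ p) (hproper : ∃ x, Φ x ≠ ⊤) (hbot : ∀ x, Φ x ≠ ⊥)
    (hΦ : ConvexEReal Φ) (hanti : ∀ x, p (-x) = -p x) (z : F) : Φ (-p z) = Φ (p z) := by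
  have henv := hp.moreauEnv_neg hproper hbot hΦ hanti z
  unfold moreauEnv at henv
  rw [hanti, show -p z - -z = -(p z - z) by abel, norm_neg, add_left_inj] at henv
  rw [← hanti, ← hp.coe_toReal hproper hbot (-z), ← hp.coe_toReal hproper hbot z, hanti, henv]

theorem exists_dist_lt [ProperSpace F] (hp : IsProx Φ p) (hbot : ∀ x, Φ x ≠ ⊥)
    (hlsc : LowerSemicontinuous Φ) (hΦ : ConvexEReal Φ) {x : F} (hx : Φ x ≠ ⊤) {ε : ℝ}
    (hε : 0 < ε) : ∃ z, dist (p z) x < ε ∧ Φ (p z) ≤ Φ x := by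
  obtain ⟨c, v, hvx, hΦv, hmin⟩ := hlsc.exists_isLocalMin_add_sq hbot hx hε
  have hsub := hΦ.isSubgradient_of_isLocalMin hbot (ne_top_of_le_ne_top hx hΦv) hmin
  exact ⟨_, by rwa [hp.apply_add_eq hsub], by rwa [hp.apply_add_eq hsub]⟩

theorem apply_neg_le [ProperSpace F] (hp : IsProx Φ p) (hproper : ∃ x, Φ x ≠ ⊤)
    (hbot : ∀ x, Φ x ≠ ⊥) (hlsc : LowerSemicontinuous Φ) (hΦ : ConvexEReal Φ)
    (hanti : ∀ x, p (-x) = -p x) (x : F) : Φ (-x) ≤ Φ x := by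
  rcases eq_or_ne (Φ x) ⊤ with hx | hx
  · exact hx ▸ le_top
  by_contra! hlt
  obtain ⟨ε, hε, hball⟩ := Metric.eventually_nhds_iff.1 (hlsc (-x) _ hlt)
  obtain ⟨z, hzx, hz⟩ := hp.exists_dist_lt hbot hlsc hΦ hx hε
  have : Φ x < Φ (-p z) := hball (by rwa [dist_neg_neg])
  rw [hp.apply_neg hproper hbot hΦ hanti] at this
  exact (hz.trans_lt this).false

end IsProx

end InnerProduct

/-- If the proximal operator of `Φ ∈ Γ₀(ℝ^N)` is antisymmetric, then the subdifferential is
symmetric (`u ∈ ∂Φ(x) ↔ −u ∈ ∂Φ(−x)`) and `Φ` itself is symmetric. -/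
theorem symm_of_prox_antisymm (N : ℕ) (Φ : EuclideanSpace ℝ (Fin N) → EReal)
    (hproper : ∃ x, Φ x ≠ ⊤) (hbot : ∀ x, Φ x ≠ ⊥)
    (hlsc : LowerSemicontinuous Φ)
    (hconv : ∀ x y : EuclideanSpace ℝ (Fin N), ∀ t : ℝ, 0 ≤ t → t ≤ 1 →
      Φ (t • x + (1 - t) • y) ≤ (t : EReal) * Φ x + ((1 - t : ℝ) : EReal) * Φ y)
    (p : EuclideanSpace ℝ (Fin N) → EuclideanSpace ℝ (Fin N))
    (hprox : ∀ x u : EuclideanSpace ℝ (Fin N), u = p x ↔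
      ∀ w, Φ u + ((‖u - x‖ ^ 2 / 2 : ℝ) : EReal) ≤ Φ w + ((‖w - x‖ ^ 2 / 2 : ℝ) : EReal))
    (hanti : ∀ x, p (-x) = -p x) :
    (∀ x u : EuclideanSpace ℝ (Fin N),
      (∀ y, Φ x + ((inner ℝ u (y - x) : ℝ) : EReal) ≤ Φ y) ↔
      (∀ y, Φ (-x) + ((inner ℝ (-u) (y - (-x)) : ℝ) : EReal) ≤ Φ y)) ∧
    (∀ x, Φ (-x) = Φ x) := by
  have hp : IsProx Φ p := hprox
  have hΦ : ConvexEReal Φ := hconv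
  refine ⟨fun x u => ⟨hp.isSubgradient_neg hproper hbot hΦ hanti, fun h => ?_⟩, fun x => ?_⟩
  · have := hp.isSubgradient_neg hproper hbot hΦ hanti h
    rwa [neg_neg, neg_neg] at this
  · refine le_antisymm (hp.apply_neg_le hproper hbot hlsc hΦ hanti x) ?_
    simpa using hp.apply_neg_le hproper hbot hlsc hΦ hanti (-x)
end

section
/- Every maximally monotone set-valued operator on ℝ is cyclically monotone: if A : ℝ → 2^ℝ is maximally monotone, then for any n ≥ 2 and points (x_i, u_i) ∈ graph A, i = 1,…,n, with x_{n+1} := x_1, one has Σ_{i=1}^n (x_{i+1} − x_i) u_i ≤ 0. -/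
/-- A set-valued operator `A : ℝ → 2^ℝ` is monotone. -/
def IsMonotoneOperator (A : ℝ → Set ℝ) : Prop :=
  ∀ x y u v : ℝ, u ∈ A x → v ∈ A y → 0 ≤ (x - y) * (u - v)

/-- `A` is maximally monotone: monotone with no proper monotone extension. -/
def IsMaximallyMonotoneOperator (A : ℝ → Set ℝ) : Prop :=
  IsMonotoneOperator A ∧
    ∀ B : ℝ → Set ℝ, IsMonotoneOperator B → (∀ x, A x ⊆ B x) → B = A

/-- Every maximally monotone operator on `ℝ` is cyclically monotone: for any `n ≥ 2`
(here `n + 2` points indexed cyclically by `Fin (n+2)`) with `u i ∈ A (x i)`,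
`Σ (x_{i+1} − x_i) u_i ≤ 0`. -/
theorem maximally_monotone_cyclically_monotone (A : ℝ → Set ℝ)
    (hA : IsMaximallyMonotoneOperator A) :
    ∀ n : ℕ, ∀ x u : Fin (n + 2) → ℝ, (∀ i, u i ∈ A (x i)) →
      ∑ i : Fin (n + 2), (x (i + 1) - x i) * u i ≤ 0 := by
  obtain ⟨hmono, -⟩ := hA
  intro n x u hu
  have hmv : Monovary u x := by
    intro i j hij
    by_contra h
    push_neg at h
    have := hmono (x i) (x j) (u i) (u j) (hu i) (hu j)
    nlinarith
  have key := hmv.sum_smul_comp_perm_le_sum_smul (σ := Equiv.addRight (1 : Fin (n + 2)))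
  simp only [smul_eq_mul, Equiv.coe_addRight] at key
  have heq : ∑ i : Fin (n + 2), (x (i + 1) - x i) * u i
      = (∑ i : Fin (n + 2), u i * x (i + 1)) - ∑ i : Fin (n + 2), u i * x i := by
    rw [← Finset.sum_sub_distrib]
    exact Finset.sum_congr rfl fun i _ => by ring
  linarith
end
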